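/- arXiv:2205.13823 — 3 statements merged into one kernel-verified Lean document; each statement's English description precedes it below -/
import Mathlib

section
/- Let (X, μ) be a measure space, ε > 0, and let f, g₁, …, gₙ be nonnegative integrable functions on X with ∑_{k=1}^n ‖f − g_k‖_{L¹} < ε and ‖f‖_{L¹} = 1. Then there exists t > 0 such that ∑_{k=1}^n μ({f > t} Δ {g_k > t}) < ε · μ({f > t}), where Δ denotes symmetric difference. -/
/-!
Since `{f > t} Δ {g > t} = {max f g > t} \ {min f g > t}`, the layer cake formula
gives `∫_{t > 0} μ({f > t} Δ {g > t}) dt = ∫ max f g - ∫ min f g = ‖f - g‖₁`, while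
`∫_{t > 0} μ{f > t} dt = ‖f‖₁ = 1`. If the inequality failed for every `t > 0`, integrating it
over `t > 0` would give `ε ≤ ∑ₖ ‖f - gₖ‖₁`.
-/

open MeasureTheory Finset

namespace MeasureTheory

theorem symmDiff_setOf_lt {X : Type*} (t : ℝ) (f g : X → ℝ) :
    symmDiff {x | t < f x} {x | t < g x} =
      {x | t < max (f x) (g x)} \ {x | t < min (f x) (g x)} := by
  ext x
  simp only [Set.mem_symmDiff, Set.mem_sdiff, Set.mem_ofPred_eq, lt_max_iff, lt_min_iff]
  tauto

theorem setOf_lt_min_subset_setOf_lt_max {X : Type*} (t : ℝ) (f g : X → ℝ) :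
    {x | t < min (f x) (g x)} ⊆ {x | t < max (f x) (g x)} :=
  Set.ofPred_subset_ofPred.2 fun _ hx => hx.trans_le min_le_max

variable {X : Type*} [MeasurableSpace X] {μ : Measure X} {f g : X → ℝ}

theorem antitone_measure_setOf_lt (μ : Measure X) (f : X → ℝ) :
    Antitone fun t : ℝ => μ {x | t < f x} :=
  fun _ _ hst => measure_mono fun _ hx => lt_of_le_of_lt hst hx

theorem measure_symmDiff_setOf_lt (hf : Integrable f μ) (hg : Integrable g μ) {t : ℝ}
    (ht : 0 < t) :
    μ (symmDiff {x | t < f x} {x | t < g x}) =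
      μ {x | t < max (f x) (g x)} - μ {x | t < min (f x) (g x)} := by
  rw [symmDiff_setOf_lt]
  refine measure_sdiff (setOf_lt_min_subset_setOf_lt_max t f g) ?_ ?_
  · exact nullMeasurableSet_lt aemeasurable_const (hf.inf hg).aemeasurable
  · exact ((hf.inf hg).measure_gt_lt_top ht).ne

theorem aemeasurable_measure_symmDiff_setOf_lt (hf : Integrable f μ) (hg : Integrable g μ) :
    AEMeasurable (fun t => μ (symmDiff {x | t < f x} {x | t < g x}))
      (volume.restrict (Set.Ioi 0)) := by
  refine ((antitone_measure_setOf_lt μ fun x => max (f x) (g x)).measurable.sub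
    (antitone_measure_setOf_lt μ fun x => min (f x) (g x)).measurable).aemeasurable.congr ?_
  filter_upwards [ae_restrict_mem measurableSet_Ioi] with t ht
  exact (measure_symmDiff_setOf_lt hf hg ht).symm

theorem lintegral_measure_setOf_lt_eq_ofReal_integral (hf0 : 0 ≤ᵐ[μ] f)
    (hf : Integrable f μ) :
    ∫⁻ t in Set.Ioi 0, μ {x | t < f x} = ENNReal.ofReal (∫ x, f x ∂μ) := by
  rw [← lintegral_eq_lintegral_meas_lt μ hf0 hf.aemeasurable,
    ofReal_integral_eq_lintegral_ofReal hf hf0]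

theorem lintegral_measure_symmDiff_setOf_lt (hf0 : 0 ≤ᵐ[μ] f) (hg0 : 0 ≤ᵐ[μ] g)
    (hf : Integrable f μ) (hg : Integrable g μ) :
    ∫⁻ t in Set.Ioi 0, μ (symmDiff {x | t < f x} {x | t < g x}) =
      ENNReal.ofReal (∫ x, |f x - g x| ∂μ) := by
  have hmax : Integrable (fun x => max (f x) (g x)) μ := hf.sup hg
  have hmin : Integrable (fun x => min (f x) (g x)) μ := hf.inf hg
  have hmax0 : 0 ≤ᵐ[μ] fun x => max (f x) (g x) := by
    filter_upwards [hf0] with x hx using le_max_of_le_left hx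
  have hmin0 : 0 ≤ᵐ[μ] fun x => min (f x) (g x) := by
    filter_upwards [hf0, hg0] with x hfx hgx using le_min hfx hgx
  calc ∫⁻ t in Set.Ioi 0, μ (symmDiff {x | t < f x} {x | t < g x})
      = ∫⁻ t in Set.Ioi 0, μ {x | t < max (f x) (g x)} - μ {x | t < min (f x) (g x)} :=
        setLIntegral_congr_fun measurableSet_Ioi fun t ht => measure_symmDiff_setOf_lt hf hg ht
    _ = ENNReal.ofReal (∫ x, max (f x) (g x) ∂μ) -
          ENNReal.ofReal (∫ x, min (f x) (g x) ∂μ) := by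
        rw [lintegral_sub (antitone_measure_setOf_lt μ _).measurable,
          lintegral_measure_setOf_lt_eq_ofReal_integral hmax0 hmax,
          lintegral_measure_setOf_lt_eq_ofReal_integral hmin0 hmin]
        · rw [lintegral_measure_setOf_lt_eq_ofReal_integral hmin0 hmin]
          exact ENNReal.ofReal_ne_top
        · exact ae_of_all _ fun t => measure_mono (setOf_lt_min_subset_setOf_lt_max t f g)
    _ = ENNReal.ofReal (∫ x, |f x - g x| ∂μ) := by
        rw [← ENNReal.ofReal_sub _ (integral_nonneg_of_ae hmin0), ← integral_sub hmax hmin]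
        simp_rw [max_sub_min_eq_abs, abs_sub_comm]

end MeasureTheory

/-- If `f, g₁, …, gₙ` are nonnegative integrable functions with `∑ ‖f − gₖ‖₁ < ε` and
`‖f‖₁ = 1`, then there is `t > 0` with `∑ μ({f > t} Δ {gₖ > t}) < ε · μ({f > t})`. -/
theorem superlevel_symmDiff_estimate {X : Type*} [MeasurableSpace X] (μ : Measure X)
    (ε : ℝ) (hε : 0 < ε) (n : ℕ) (f : X → ℝ) (g : Fin n → X → ℝ)
    (hf0 : ∀ x, 0 ≤ f x) (hg0 : ∀ k x, 0 ≤ g k x)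
    (hfint : Integrable f μ) (hgint : ∀ k, Integrable (g k) μ)
    (hsum : ∑ k, ∫ x, |f x - g k x| ∂μ < ε)
    (hnorm : ∫ x, f x ∂μ = 1) :
    ∃ t : ℝ, 0 < t ∧
      (∑ k, μ (symmDiff {x | t < f x} {x | t < g k x}))
        < ENNReal.ofReal ε * μ {x | t < f x} := by
  by_contra! hcon
  have hlayer : ∫⁻ t in Set.Ioi 0, μ {x | t < f x} = 1 := by
    rw [lintegral_measure_setOf_lt_eq_ofReal_integral (ae_of_all _ hf0) hfint, hnorm,
      ENNReal.ofReal_one]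
  have hε_le : ENNReal.ofReal ε ≤ ENNReal.ofReal (∑ k, ∫ x, |f x - g k x| ∂μ) :=
    calc ENNReal.ofReal ε
        = ∫⁻ t in Set.Ioi 0, ENNReal.ofReal ε * μ {x | t < f x} := by
          rw [lintegral_const_mul' _ _ ENNReal.ofReal_ne_top, hlayer, mul_one]
      _ ≤ ∫⁻ t in Set.Ioi 0, ∑ k, μ (symmDiff {x | t < f x} {x | t < g k x}) :=
          setLIntegral_mono' measurableSet_Ioi hcon
      _ = ∑ k, ENNReal.ofReal (∫ x, |f x - g k x| ∂μ) := by
          rw [lintegral_finsetSum' _ fun k _ =>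
            aemeasurable_measure_symmDiff_setOf_lt hfint (hgint k)]
          exact sum_congr rfl fun k _ => lintegral_measure_symmDiff_setOf_lt
            (ae_of_all _ hf0) (ae_of_all _ (hg0 k)) hfint (hgint k)
      _ = ENNReal.ofReal (∑ k, ∫ x, |f x - g k x| ∂μ) :=
          (ENNReal.ofReal_sum_of_nonneg fun k _ => integral_nonneg fun x => abs_nonneg _).symm
  exact hε_le.not_gt ((ENNReal.ofReal_lt_ofReal_iff hε).2 hsum)
end

section
/- Let G be a unimodular locally compact group with Haar measure μ. Suppose there exists a net (f_j) of nonnegative functions in L¹(G) with ∫_G f_j dμ = 1 such that for every s ∈ G, ‖f_j − inner_s f_j‖₁ → 0, where (inner_s f)(t) = f(s⁻¹ t s). Then G is inner amenable: there exists a state m on L∞(G) with m(inner_s f) = m(f) for all s ∈ G and f ∈ L∞(G). -/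
/-!
Pairing `f_j` against `L∞(G)` gives states `h ↦ ∫ f_j h` of norm one, so they have a pointwise
limit `m` along any ultrafilter finer than `l`, and `m` is again a state. Since left and right
Haar measures agree, `t ↦ s⁻¹ t s` preserves `μ`, hence the `j`-th state moves by at most
`‖f_j - inner_s f_j‖₁ ‖h‖∞` when `h` is replaced by `inner_s h`; this tends to zero, so `m` is
inner invariant.
-/

open MeasureTheory Filter Topology
open scoped ENNReal

theorem exists_linearMap_tendsto_ultrafilter {ι E : Type*} [AddCommGroup E] [Module ℝ E]
    (U : Ultrafilter ι) (φ : ι → E →ₗ[ℝ] ℝ) (hφ : ∀ x, ∃ C, ∀ j, ‖φ j x‖ ≤ C) :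
    ∃ m : E →ₗ[ℝ] ℝ, ∀ x, Tendsto (fun j => φ j x) U (𝓝 (m x)) := by
  have hlim : ∀ x, ∃ y, Tendsto (fun j => φ j x) U (𝓝 y) := fun x => by
    obtain ⟨C, hC⟩ := hφ x
    obtain ⟨y, -, hy⟩ := (isCompact_closedBall (0 : ℝ) C).ultrafilter_le_nhds (U.map (φ · x))
      (tendsto_principal.2 <| .of_forall fun j => mem_closedBall_zero_iff.2 (hC j))
    exact ⟨y, hy⟩
  choose m hm using hlim
  refine ⟨{ toFun := m, map_add' := fun x y => ?_, map_smul' := fun c x => ?_ }, hm⟩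
  · exact tendsto_nhds_unique (hm (x + y)) (by simpa using (hm x).add (hm y))
  · exact tendsto_nhds_unique (hm (c • x)) (by simpa using (hm x).const_mul c)

section Pairing

variable {α : Type*} [MeasurableSpace α] (μ : Measure α)

noncomputable abbrev l1Pairing : Lp ℝ 1 μ →L[ℝ] Lp ℝ ∞ μ →L[ℝ] ℝ :=
  (ContinuousLinearMap.mul ℝ ℝ).lpPairing μ 1 ∞

variable {μ}

theorem l1Pairing_apply (F : Lp ℝ 1 μ) (h : Lp ℝ ∞ μ) :
    l1Pairing μ F h = ∫ x, F x * h x ∂μ :=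
  ContinuousLinearMap.lpPairing_eq_integral _ F h

theorem MeasureTheory.Lp.ae_norm_le_norm_top {E : Type*} [NormedAddCommGroup E] (h : Lp E ∞ μ) :
    ∀ᵐ x ∂μ, ‖h x‖ ≤ ‖h‖ := by
  rw [Lp.norm_def, toReal_eLpNorm (Lp.aestronglyMeasurable h)]
  exact ae_le_lpNorm_exponent_top (Lp.memLp h)

theorem abs_l1Pairing_le (F : Lp ℝ 1 μ) (h : Lp ℝ ∞ μ) :
    |l1Pairing μ F h| ≤ ‖F‖ * ‖h‖ := by
  rw [l1Pairing_apply, L1.norm_eq_integral_norm, ← integral_mul_const]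
  refine abs_integral_le_integral_abs.trans (integral_mono_of_nonneg
    (Eventually.of_forall fun x => abs_nonneg _) ((L1.integrable_coeFn F).norm.mul_const _) ?_)
  filter_upwards [Lp.ae_norm_le_norm_top h] with x hx
  rw [abs_mul]
  exact mul_le_mul_of_nonneg_left hx (abs_nonneg _)

theorem l1Pairing_nonneg {F : Lp ℝ 1 μ} {h : Lp ℝ ∞ μ} (hF : 0 ≤ᵐ[μ] F) (hh : 0 ≤ᵐ[μ] h) :
    0 ≤ l1Pairing μ F h := by
  rw [l1Pairing_apply]
  exact integral_nonneg_of_ae (by filter_upwards [hF, hh] with x hFx hhx using mul_nonneg hFx hhx)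

theorem l1Pairing_compMeasurePreserving {β : Type*} [MeasurableSpace β] {ν : Measure β}
    {c : α → β} (hc : MeasurePreserving c μ ν) (F : Lp ℝ 1 ν) (h : Lp ℝ ∞ ν) :
    l1Pairing μ (Lp.compMeasurePreserving c hc F) (Lp.compMeasurePreserving c hc h) =
      l1Pairing ν F h := by
  rw [l1Pairing_apply, l1Pairing_apply]
  calc ∫ x, Lp.compMeasurePreserving c hc F x * Lp.compMeasurePreserving c hc h x ∂μ
      = ∫ x, F (c x) * h (c x) ∂μ := by
        refine integral_congr_ae ?_
        filter_upwards [Lp.coeFn_compMeasurePreserving F hc, Lp.coeFn_compMeasurePreserving h hc]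
          with x hFx hhx
        rw [hFx, hhx, Function.comp_apply, Function.comp_apply]
    _ = ∫ y, F y * h y ∂ν := by
        have hFh : AEStronglyMeasurable (fun y => F y * h y) (Measure.map c μ) :=
          hc.map_eq ▸ (Lp.aestronglyMeasurable F).mul (Lp.aestronglyMeasurable h)
        rw [← integral_map hc.aemeasurable hFh, hc.map_eq]

theorem l1Pairing_one (F : Lp ℝ 1 μ) :
    l1Pairing μ F ((memLp_top_const (1 : ℝ)).toLp fun _ => 1) = ∫ x, F x ∂μ := by
  rw [l1Pairing_apply]
  refine integral_congr_ae ?_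
  filter_upwards [(memLp_top_const (1 : ℝ) (μ := μ)).coeFn_toLp] with x hx
  rw [hx, mul_one]

theorem abs_l1Pairing_comp_sub_le {c : α → α} (hc : MeasurePreserving c μ μ) (F : Lp ℝ 1 μ)
    (h : Lp ℝ ∞ μ) :
    |l1Pairing μ F (Lp.compMeasurePreserving c hc h) - l1Pairing μ F h| ≤
      ‖F - Lp.compMeasurePreserving c hc F‖ * ‖h‖ := by
  rw [← l1Pairing_compMeasurePreserving hc F h, ← sub_apply, ← map_sub,
    ← Lp.norm_compMeasurePreserving h hc]
  exact abs_l1Pairing_le _ _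

theorem norm_toL1_sub_compMeasurePreserving {f : α → ℝ} (hf : Integrable f μ) {c : α → α}
    (hc : MeasurePreserving c μ μ) :
    ‖hf.toL1 f - Lp.compMeasurePreserving c hc (hf.toL1 f)‖ = ∫ x, |f x - f (c x)| ∂μ := by
  have hfc : Lp.compMeasurePreserving c hc (hf.toL1 f) =
      (hc.integrable_comp_of_integrable hf).toL1 (f ∘ c) := rfl
  rw [hfc, ← Integrable.toL1_sub, L1.norm_of_fun_eq_integral_norm]
  rfl

end Pairing

theorem measurePreserving_conj {G : Type*} [Group G] [MeasurableSpace G] [MeasurableMul G]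
    (μ : Measure G) [μ.IsMulLeftInvariant] [μ.IsMulRightInvariant] (s : G) :
    MeasurePreserving (fun t => s⁻¹ * t * s) μ μ :=
  (measurePreserving_mul_right μ s).comp (measurePreserving_mul_left μ s⁻¹)

theorem inner_amenable_of_asymptotically_central_net_general
    {G : Type*} [Group G] [TopologicalSpace G] [IsTopologicalGroup G]
    [MeasurableSpace G] [BorelSpace G]
    (μ : Measure G) [μ.IsHaarMeasure] [μ.IsMulRightInvariant]
    {ι : Type*} (l : Filter ι) [l.NeBot] (f : ι → G → ℝ)
    (hpos : ∀ j x, 0 ≤ f j x) (hint : ∀ j, Integrable (f j) μ)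
    (hnorm : ∀ j, ∫ x, f j x ∂μ = 1)
    (hcentral : ∀ s : G,
      Tendsto (fun j => ∫ t, |f j t - f j (s⁻¹ * t * s)| ∂μ) l (nhds 0)) :
    ∃ m : Lp ℝ ⊤ μ →ₗ[ℝ] ℝ,
      (∀ h : Lp ℝ ⊤ μ, 0 ≤ᵐ[μ] (h : G → ℝ) → 0 ≤ m h) ∧
      m ((memLp_top_const (1 : ℝ)).toLp (fun _ => (1 : ℝ))) = 1 ∧
      (∀ s : G, ∀ h h' : Lp ℝ ⊤ μ,
        (h' : G → ℝ) =ᵐ[μ] (fun t => (h : G → ℝ) (s⁻¹ * t * s)) → m h' = m h) := by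
  let F j := (hint j).toL1 (f j)
  have hF_nonneg j : 0 ≤ᵐ[μ] F j := by
    filter_upwards [(hint j).coeFn_toL1] with x hx
    exact (hpos j x).trans_eq hx.symm
  have hF_integral j : ∫ x, F j x ∂μ = 1 :=
    (integral_congr_ae (hint j).coeFn_toL1).trans (hnorm j)
  have hF_norm j : ‖F j‖ = 1 := by
    rw [L1.norm_eq_integral_norm, ← hF_integral j]
    exact integral_congr_ae (by filter_upwards [hF_nonneg j] with x hx using Real.norm_of_nonneg hx)
  obtain ⟨m, hm⟩ := exists_linearMap_tendsto_ultrafilter (Ultrafilter.of l)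
    (fun j => (l1Pairing μ (F j)).toLinearMap)
    fun h => ⟨‖h‖, fun j => by simpa [hF_norm j] using abs_l1Pairing_le (F j) h⟩
  refine ⟨m, fun h hh => ge_of_tendsto' (hm h) fun j => l1Pairing_nonneg (hF_nonneg j) hh,
    tendsto_nhds_unique (hm _) ?_, fun s h h' hh' => ?_⟩
  · exact tendsto_const_nhds.congr fun j => ((l1Pairing_one (F j)).trans (hF_integral j)).symm
  have hc := measurePreserving_conj μ s
  obtain rfl : h' = Lp.compMeasurePreserving _ hc h :=
    Lp.ext (hh'.trans (Lp.coeFn_compMeasurePreserving h hc).symm)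
  have hdiff : Tendsto (fun j => l1Pairing μ (F j) (Lp.compMeasurePreserving _ hc h) -
      l1Pairing μ (F j) h) (Ultrafilter.of l) (𝓝 0) := by
    refine squeeze_zero_norm (fun j => abs_l1Pairing_comp_sub_le hc (F j) h) ?_
    rw [← zero_mul ‖h‖]
    refine (((hcentral s).mul_const _).mono_left (Ultrafilter.of_le l)).congr fun j => ?_
    rw [norm_toL1_sub_compMeasurePreserving]
  exact tendsto_nhds_unique (hm _) (by simpa using (hm h).add hdiff)

/-- If a unimodular locally compact group `G` admits a net `(f_j)` of nonnegative
normalized `L¹` functions that is asymptotically central, i.e.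
`‖f_j − inner_s f_j‖₁ → 0` for all `s`, then `G` is inner amenable: there is a
state `m` on `L∞(G)` with `m(inner_s f) = m(f)` for all `s ∈ G`. -/
theorem inner_amenable_of_asymptotically_central_net
    {G : Type*} [Group G] [TopologicalSpace G] [IsTopologicalGroup G]
    [LocallyCompactSpace G] [MeasurableSpace G] [BorelSpace G]
    (μ : Measure G) [μ.IsHaarMeasure] [μ.IsMulRightInvariant]
    {ι : Type*} (l : Filter ι) [l.NeBot] (f : ι → G → ℝ)
    (hpos : ∀ j x, 0 ≤ f j x) (hint : ∀ j, Integrable (f j) μ)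
    (hnorm : ∀ j, ∫ x, f j x ∂μ = 1)
    (hcentral : ∀ s : G,
      Tendsto (fun j => ∫ t, |f j t - f j (s⁻¹ * t * s)| ∂μ) l (nhds 0)) :
    ∃ m : Lp ℝ ⊤ μ →ₗ[ℝ] ℝ,
      (∀ h : Lp ℝ ⊤ μ, 0 ≤ᵐ[μ] (h : G → ℝ) → 0 ≤ m h) ∧
      m ((memLp_top_const (1 : ℝ)).toLp (fun _ => (1 : ℝ))) = 1 ∧
      (∀ s : G, ∀ h h' : Lp ℝ ⊤ μ,
        (h' : G → ℝ) =ᵐ[μ] (fun t => (h : G → ℝ) (s⁻¹ * t * s)) → m h' = m h) :=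
  inner_amenable_of_asymptotically_central_net_general μ l f hpos hint hnorm hcentral
end

section
/- Let G be a locally compact group with left Haar measure μ, equipped with a left invariant metric d, and suppose there is a constant c ≥ 1 such that μ(B(e, 2r)) ≤ c · μ(B(e, r)) for all r ∈ (0, 1/2], where B(e, r) is the open ball of radius r centered at the identity. Then for every r ∈ (0, 1/2], the ball B = B(e, r) satisfies μ(B)³ ≤ c³ ∫_B μ(B ∩ sB)² dμ(s). -/
open MeasureTheory Metric
open scoped Pointwise ENNReal

section IsometricSMul

variable {G : Type*} [Group G] [MetricSpace G] [IsIsometricSMul G G]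

theorem ball_half_subset_inter_smul_ball {r : ℝ} {s : G} (hs : s ∈ ball (1 : G) (r / 2)) :
    ball (1 : G) (r / 2) ⊆ ball (1 : G) r ∩ s • ball (1 : G) r := by
  rw [Metric.smul_ball, smul_eq_mul, mul_one]
  rw [mem_ball] at hs
  refine Set.subset_inter (ball_subset_ball (by linarith [dist_nonneg (x := s) (y := 1)]))
    (ball_subset_ball' ?_)
  rw [dist_comm]
  linarith

theorem measure_ball_half_pow_succ_le_lintegral_inter_smul_ball [MeasurableSpace G]
    [OpensMeasurableSpace G] (μ : Measure G) (r : ℝ) (p : ℕ) :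
    μ (ball (1 : G) (r / 2)) ^ (p + 1) ≤
      ∫⁻ s in ball (1 : G) r, μ (ball (1 : G) r ∩ s • ball (1 : G) r) ^ p ∂μ := by
  by_cases hr : r ≤ 0
  · simp [ball_eq_empty.2 (by linarith : r / 2 ≤ 0)]
  calc μ (ball (1 : G) (r / 2)) ^ (p + 1)
      = ∫⁻ _ in ball (1 : G) (r / 2), μ (ball (1 : G) (r / 2)) ^ p ∂μ := by
        rw [setLIntegral_const, pow_succ]
    _ ≤ ∫⁻ s in ball (1 : G) (r / 2), μ (ball (1 : G) r ∩ s • ball (1 : G) r) ^ p ∂μ :=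
        setLIntegral_mono' measurableSet_ball fun s hs =>
          pow_le_pow_left' (measure_mono (ball_half_subset_inter_smul_ball hs)) p
    _ ≤ _ := lintegral_mono_set (ball_subset_ball (by linarith))

end IsometricSMul

theorem haar_ball_cube_le_of_doubling_general
    {G : Type*} [Group G] [MetricSpace G] [MeasurableSpace G] [BorelSpace G]
    (μ : Measure G)
    (hinv : ∀ g x y : G, dist (g * x) (g * y) = dist x y)
    (c : ℝ)
    (hdoubling : ∀ r : ℝ, 0 < r → r ≤ 1 / 2 →
      μ (ball (1 : G) (2 * r)) ≤ ENNReal.ofReal c * μ (ball (1 : G) r)) :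
    ∀ r : ℝ, 0 < r → r ≤ 1 / 2 →
      μ (ball (1 : G) r) ^ 3 ≤
        (ENNReal.ofReal c) ^ 3 *
          ∫⁻ s in ball (1 : G) r, μ (ball (1 : G) r ∩ s • ball (1 : G) r) ^ 2 ∂μ := by
  intro r hr hr2
  have : IsIsometricSMul G G := ⟨fun g => Isometry.of_dist_eq (hinv g)⟩
  have hdouble_half : μ (ball (1 : G) r) ≤ ENNReal.ofReal c * μ (ball (1 : G) (r / 2)) := by
    simpa [mul_div_cancel₀ r two_ne_zero] using hdoubling (r / 2) (by linarith) (by linarith)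
  calc μ (ball (1 : G) r) ^ 3 ≤ (ENNReal.ofReal c * μ (ball (1 : G) (r / 2))) ^ 3 :=
        pow_le_pow_left' hdouble_half 3
    _ = ENNReal.ofReal c ^ 3 * μ (ball (1 : G) (r / 2)) ^ (2 + 1) := by rw [mul_pow]
    _ ≤ _ := by
        gcongr
        exact measure_ball_half_pow_succ_le_lintegral_inter_smul_ball μ r 2

/-- Let `G` be a locally compact group with left Haar measure `μ` and a left invariant
metric whose Haar measure is doubling for small balls with constant `c`. Then for every
`r ∈ (0, 1/2]`, the ball `B = B(e, r)` satisfies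
`μ(B)³ ≤ c³ ∫_B μ(B ∩ sB)² dμ(s)`. -/
theorem haar_ball_cube_le_of_doubling
    {G : Type*} [Group G] [MetricSpace G] [IsTopologicalGroup G]
    [LocallyCompactSpace G] [MeasurableSpace G] [BorelSpace G]
    (μ : Measure G) [μ.IsHaarMeasure]
    (hinv : ∀ g x y : G, dist (g * x) (g * y) = dist x y)
    (c : ℝ) (hc : 1 ≤ c)
    (hdoubling : ∀ r : ℝ, 0 < r → r ≤ 1 / 2 →
      μ (ball (1 : G) (2 * r)) ≤ ENNReal.ofReal c * μ (ball (1 : G) r)) :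
    ∀ r : ℝ, 0 < r → r ≤ 1 / 2 →
      μ (ball (1 : G) r) ^ 3 ≤
        (ENNReal.ofReal c) ^ 3 *
          ∫⁻ s in ball (1 : G) r, μ (ball (1 : G) r ∩ s • ball (1 : G) r) ^ 2 ∂μ :=
  haar_ball_cube_le_of_doubling_general μ hinv c hdoubling
end
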